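/- (Near-maximizers of F are near C*) Let F(C) := 4φ(C)² − λ*(4Φ(−C) − 1) and let 0 ≤ ε < 0.01. If C ≥ 0 satisfies F(C) ≥ F(C*) − ε, then |C − C*| ≤ 3√ε. -/

import Mathlib

open MeasureTheory

/-- The standard Gaussian density `φ(x) = (1/√(2π)) e^{-x²/2}`. -/
noncomputable def gphi (x : ℝ) : ℝ := (Real.sqrt (2 * Real.pi))⁻¹ * Real.exp (-(x ^ 2) / 2)

/-- The standard Gaussian CDF `Φ(x) = ∫_{-∞}^x φ(t) dt`. -/
noncomputable def gPhi (x : ℝ) : ℝ := ∫ t in Set.Iic x, gphi t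

/-- The standard Gaussian measure on `ℝ^{n+1}`. -/
noncomputable def gauss (n : ℕ) : Measure (Fin (n + 1) → ℝ) :=
  Measure.pi fun _ => ProbabilityTheory.gaussianReal 0 1

/-- The multivariate probabilists' Hermite polynomial `He_α(x) = ∏ᵢ He_{αᵢ}(xᵢ)`. -/
noncomputable def hermiteProd {m : ℕ} (α : Fin m → ℕ) (x : Fin m → ℝ) : ℝ :=
  ∏ i, Polynomial.aeval (x i) (Polynomial.hermite (α i))

/-- The factorial of a multi-index, `α! = ∏ᵢ αᵢ!`. -/
def mfact {m : ℕ} (α : Fin m → ℕ) : ℕ := ∏ i, Nat.factorial (α i)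

/-- A Davie–Reeds strip pair in direction `x₁`, up to a `γ`-null set. -/
def StripPair (n : ℕ) (Cstar : ℝ) (f g : (Fin (n + 1) → ℝ) → ℝ) : Prop :=
  ∀ᵐ x ∂(gauss n),
    (Cstar ≤ x 0 → f x = 1 ∧ g x = 1) ∧
    (x 0 ≤ -Cstar → f x = -1 ∧ g x = -1) ∧
    (|x 0| < Cstar → g x = -f x)


open intervalIntegral

noncomputable def ninv : ℝ := (Real.sqrt (2 * Real.pi))⁻¹

lemma sqrt_two_pi_lb : 2.506628 < Real.sqrt (2 * Real.pi) := by
  rw [show (2.506628 : ℝ) = Real.sqrt (2.506628 ^ 2) by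
    rw [Real.sqrt_sq]; norm_num]
  apply Real.sqrt_lt_sqrt (by positivity)
  nlinarith [Real.pi_gt_d6]

lemma sqrt_two_pi_ub : Real.sqrt (2 * Real.pi) < 2.506629 := by
  rw [show (2.506629 : ℝ) = Real.sqrt (2.506629 ^ 2) by
    rw [Real.sqrt_sq]; norm_num]
  apply Real.sqrt_lt_sqrt (by positivity)
  nlinarith [Real.pi_lt_d6]

lemma ninv_pos : 0 < ninv := by
  have := sqrt_two_pi_lb; unfold ninv; positivity

lemma ninv_lb : 0.3989421 ≤ ninv := by
  rw [ninv, le_inv_comm₀] <;> nlinarith [sqrt_two_pi_ub, sqrt_two_pi_lb]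

lemma ninv_ub : ninv ≤ 0.3989424 := by
  rw [ninv, inv_le_comm₀] <;> nlinarith [sqrt_two_pi_ub, sqrt_two_pi_lb]

lemma exp_neg_taylor {a : ℝ} (h0 : 0 ≤ a) (h1 : a ≤ 1) :
    |Real.exp (-a) - (1 - a + a^2/2 - a^3/6 + a^4/24 - a^5/120)| ≤ a^6 * (7/4320) := by
  have h := Real.exp_bound (x := -a) (by rwa [abs_neg, abs_of_nonneg h0]) (n := 6) (by norm_num)
  rw [abs_neg, abs_of_nonneg h0] at h
  calc |Real.exp (-a) - (1 - a + a^2/2 - a^3/6 + a^4/24 - a^5/120)|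
      = |Real.exp (-a) - ∑ m ∈ Finset.range 6, (-a) ^ m / m.factorial| := by
        congr 1
        simp [Finset.sum_range_succ, Nat.factorial]
        ring
    _ ≤ a ^ 6 * (7 / (720 * 6)) := by convert h using 2; norm_num [Nat.factorial]
    _ ≤ a ^ 6 * (7/4320) := by norm_num

lemma exp045 : Real.exp (-0.045) ∈ Set.Icc (0.9559974 : ℝ) 0.9559975 := by
  have h := abs_le.mp (exp_neg_taylor (a := 0.045) (by norm_num) (by norm_num))
  constructor <;> [linarith [h.1]; linarith [h.2]]

lemma exp018 : Real.exp (-0.18) ∈ Set.Icc (0.8352701 : ℝ) 0.8352703 := by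
  have h := abs_le.mp (exp_neg_taylor (a := 0.18) (by norm_num) (by norm_num))
  constructor <;> [linarith [h.1]; linarith [h.2]]

lemma exp05 : Real.exp (-0.5) ∈ Set.Icc (0.606485 : ℝ) 0.6065358 := by
  have h := abs_le.mp (exp_neg_taylor (a := 0.5) (by norm_num) (by norm_num))
  constructor <;> [linarith [h.1]; linarith [h.2]]

lemma exp2 : Real.exp (-2) ∈ Set.Icc (0.13529 : ℝ) 0.13534 := by
  have h4 : Real.exp (-2) = Real.exp (-0.5) ^ 4 := by
    rw [← Real.exp_nat_mul]; norm_num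
  have h := exp05
  have e1 := Real.exp_pos (-0.5)
  have hsq : Real.exp (-0.5) ^ 2 ∈ Set.Icc (0.367824 : ℝ) 0.3678857 := by
    constructor <;> nlinarith [h.1, h.2]
  have h4' : Real.exp (-2) = (Real.exp (-0.5) ^ 2) ^ 2 := by rw [h4]; ring
  constructor <;> rw [h4'] <;> nlinarith [hsq.1, hsq.2]

lemma gphi_eq (x : ℝ) : gphi x = ninv * Real.exp (-(x ^ 2) / 2) := rfl

lemma gphi_pos' (x : ℝ) : 0 < gphi x := mul_pos ninv_pos (Real.exp_pos _)

lemma gphi_anti' {x y : ℝ} (hx : 0 ≤ x) (hxy : x ≤ y) : gphi y ≤ gphi x := by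
  rw [gphi_eq, gphi_eq]
  apply mul_le_mul_of_nonneg_left _ ninv_pos.le
  apply Real.exp_le_exp.mpr
  nlinarith

lemma gphi03' : gphi 0.3 ∈ Set.Icc (0.381387 : ℝ) 0.381388 := by
  have h : gphi 0.3 = ninv * Real.exp (-0.045) := by rw [gphi_eq]; norm_num
  constructor <;> rw [h] <;>
    nlinarith [exp045.1, exp045.2, ninv_lb, ninv_ub, Real.exp_pos (-0.045 : ℝ)]

lemma gphi06' : gphi 0.6 ∈ Set.Icc (0.333224 : ℝ) 0.333226 := by
  have h : gphi 0.6 = ninv * Real.exp (-0.18) := by rw [gphi_eq]; norm_num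
  constructor <;> rw [h] <;>
    nlinarith [exp018.1, exp018.2, ninv_lb, ninv_ub, Real.exp_pos (-0.18 : ℝ)]

lemma gphi1' : gphi 1 ∈ Set.Icc (0.24195 : ℝ) 0.24198 := by
  have h : gphi 1 = ninv * Real.exp (-0.5) := by rw [gphi_eq]; norm_num
  constructor <;> rw [h] <;>
    nlinarith [exp05.1, exp05.2, ninv_lb, ninv_ub, Real.exp_pos (-0.5 : ℝ)]

lemma gphi2' : gphi 2 ∈ Set.Icc (0.053972 : ℝ) 0.053993 := by
  have h : gphi 2 = ninv * Real.exp (-2) := by rw [gphi_eq]; norm_num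
  constructor <;> rw [h] <;>
    nlinarith [exp2.1, exp2.2, ninv_lb, ninv_ub, Real.exp_pos (-2 : ℝ)]


lemma continuous_gphi : Continuous gphi := by
  unfold gphi
  fun_prop

lemma gphi_even (x : ℝ) : gphi (-x) = gphi x := by rw [gphi_eq, gphi_eq]; ring_nf

lemma integrable_gphi : Integrable gphi := by
  have : gphi = fun x => (Real.sqrt (2 * Real.pi))⁻¹ * Real.exp (-(1/2) * x ^ 2) := by
    funext x; rw [gphi_eq]; unfold ninv; ring_nf
  rw [this]
  exact (integrable_exp_neg_mul_sq (by norm_num)).const_mul _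

lemma hasDerivAt_gphi (x : ℝ) : HasDerivAt gphi (-x * gphi x) x := by
  have h1 : HasDerivAt (fun t : ℝ => -(t ^ 2) / 2) (-x) x := by
    have := ((hasDerivAt_pow 2 x).neg).div_const 2
    refine this.congr_deriv ?_; ring
  have := (h1.exp).const_mul ninv
  refine this.congr_deriv ?_
  rw [gphi_eq]; ring

lemma hasDerivAt_gphi_sq (x : ℝ) :
    HasDerivAt (fun t => -4 * gphi t ^ 2) (8 * x * gphi x ^ 2) x := by
  have := ((hasDerivAt_gphi x).pow 2).const_mul (-4 : ℝ)
  refine this.congr_deriv ?_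
  ring

lemma hasDerivAt_g (x : ℝ) : HasDerivAt (fun t => 2 * t * gphi t) (2 * gphi x * (1 - x ^ 2)) x := by
  have := ((hasDerivAt_id x).const_mul (2:ℝ)).mul (hasDerivAt_gphi x)
  refine this.congr_deriv ?_
  simp only [id_eq]
  ring

-- FTC identities
lemma g_diff (a b : ℝ) :
    2 * b * gphi b - 2 * a * gphi a = ∫ t in a..b, 2 * gphi t * (1 - t ^ 2) := by
  symm
  apply integral_eq_sub_of_hasDerivAt (fun x _ => hasDerivAt_g x)
  apply Continuous.intervalIntegrable
  have := continuous_gphi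
  fun_prop

lemma gphi_sq_diff (a b : ℝ) :
    4 * gphi a ^ 2 - 4 * gphi b ^ 2 = ∫ t in a..b, 8 * t * gphi t ^ 2 := by
  have := integral_eq_sub_of_hasDerivAt (f := fun t => -4 * gphi t ^ 2)
    (f' := fun t => 8 * t * gphi t ^ 2) (a := a) (b := b)
    (fun x _ => hasDerivAt_gphi_sq x) ?_
  · linarith [this]
  · apply Continuous.intervalIntegrable
    have := continuous_gphi
    fun_prop

lemma gPhi_diff (a b : ℝ) : gPhi b - gPhi a = ∫ t in a..b, gphi t :=
  intervalIntegral.integral_Iic_sub_Iic integrable_gphi.integrableOn integrable_gphi.integrableOn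

lemma gPhi_neg_diff (a b : ℝ) : gPhi (-a) - gPhi (-b) = ∫ t in a..b, gphi t := by
  rw [gPhi_diff (-b) (-a)]
  rw [← intervalIntegral.integral_comp_neg gphi]
  congr 1; funext t; exact gphi_even t

lemma integral_gphi_total : ∫ x, gphi x = 1 := by
  have h : ∫ x, gphi x = ninv * ∫ x : ℝ, Real.exp (-(1/2) * x ^ 2) := by
    rw [← MeasureTheory.integral_const_mul]
    congr 1; funext x; rw [gphi_eq]; ring_nf
  rw [h, integral_gaussian]
  have h2 : Real.sqrt (Real.pi / (1/2)) = Real.sqrt (2 * Real.pi) := by norm_num; ring_nf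
  rw [h2]
  unfold ninv
  have : (0:ℝ) < Real.sqrt (2 * Real.pi) := Real.sqrt_pos.mpr (by positivity)
  field_simp

lemma gPhi_zero : gPhi 0 = 1/2 := by
  have hs : ∫ x in Set.Iic (0:ℝ), gphi x = ∫ x in Set.Ioi (0:ℝ), gphi x := by
    have h0 := integral_comp_neg_Iic (0:ℝ) gphi
    simp only [gphi_even, neg_zero] at h0
    exact h0
  have htot := intervalIntegral.integral_Iic_add_Ioi (b := (0:ℝ))
    integrable_gphi.integrableOn integrable_gphi.integrableOn
  rw [integral_gphi_total] at htot
  unfold gPhi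
  linarith [hs, htot]


lemma intInt (f : ℝ → ℝ) (hf : Continuous f) (a b : ℝ) :
    IntervalIntegrable (fun t => f t * (2 * gphi t * (1 - t ^ 2))) volume a b := by
  apply Continuous.intervalIntegrable
  have := continuous_gphi
  fun_prop

lemma gcont : Continuous fun t : ℝ => 2 * gphi t * (1 - t ^ 2) := by
  have := continuous_gphi; fun_prop

/-- On `[0,1]`, `g(t) = 2tφ(t)` is monotone. -/
lemma g_mono {a b : ℝ} (ha : 0 ≤ a) (hab : a ≤ b) (hb : b ≤ 1) :
    2 * a * gphi a ≤ 2 * b * gphi b := by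
  have h := g_diff a b
  have : (0:ℝ) ≤ ∫ t in a..b, 2 * gphi t * (1 - t ^ 2) := by
    apply intervalIntegral.integral_nonneg hab
    intro u hu
    have h1 : 0 < gphi u := gphi_pos' u
    have h2 : u ^ 2 ≤ 1 := by nlinarith [hu.1, hu.2]
    nlinarith
  linarith

/-- On `[1,∞)`, `g` is antitone. -/
lemma g_anti {a b : ℝ} (ha : 1 ≤ a) (hab : a ≤ b) :
    2 * b * gphi b ≤ 2 * a * gphi a := by
  have h := g_diff a b
  have : (∫ t in a..b, 2 * gphi t * (1 - t ^ 2)) ≤ 0 := by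
    rw [← neg_nonneg, ← intervalIntegral.integral_neg]
    apply intervalIntegral.integral_nonneg hab
    intro u hu
    have h1 : 0 < gphi u := gphi_pos' u
    have h2 : 1 ≤ u ^ 2 := by nlinarith [hu.1, hu.2]
    nlinarith
  linarith

/-- Quantitative growth of `g` on `[0, 0.6]`. -/
lemma g_growth {a b : ℝ} (ha : 0 ≤ a) (hab : a ≤ b) (hb : b ≤ 0.6) :
    2 * b * gphi b - 2 * a * gphi a ≥ (1.28 * gphi 0.6) * (b - a) := by
  have h := g_diff a b
  have hmono : (∫ t in a..b, (1.28 * gphi 0.6)) ≤ ∫ t in a..b, 2 * gphi t * (1 - t ^ 2) := by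
    apply intervalIntegral.integral_mono_on hab
    · exact intervalIntegrable_const
    · exact gcont.intervalIntegrable a b
    · intro u hu
      have h1 : gphi 0.6 ≤ gphi u := gphi_anti' (le_trans ha hu.1) (le_trans hu.2 hb)
      have h2 : 0.64 ≤ 1 - u ^ 2 := by nlinarith [hu.1, hu.2, ha]
      have h3 : 0 < gphi 0.6 := gphi_pos' _
      nlinarith
  rw [intervalIntegral.integral_const, smul_eq_mul] at hmono
  linarith

/-- Localization: the root `Cstar` lies below 0.3. -/
lemma cstar_lt (s : ℝ) (hs0 : 0 < s) (hs1 : s < 1)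
    (hroot : 4 * gphi s ^ 2 - 4 * gPhi (-s) + 1 = 0) : s < 0.3 := by
  by_contra hcon
  push_neg at hcon
  -- gPhi (-s) = 1/2 - ∫_0^s gphi
  have h1 : gPhi 0 - gPhi (-s) = ∫ t in (0:ℝ)..s, gphi t := by
    have := gPhi_neg_diff 0 s; rwa [neg_zero] at this
  -- lower bound on the integral
  have h2 : ninv * (s - s^3/6) ≤ ∫ t in (0:ℝ)..s, gphi t := by
    have hftc : ∫ u in (0:ℝ)..s, ninv * (1 - u^2/2) = ninv * (s - s^3/6) := by
      have : ∀ x ∈ Set.uIcc (0:ℝ) s, HasDerivAt (fun u => ninv * (u - u^3/6))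
          (ninv * (1 - x^2/2)) x := by
        intro x _
        have h := ((hasDerivAt_id x).sub (((hasDerivAt_pow 3 x)).div_const 6)).const_mul ninv
        refine h.congr_deriv ?_
        ring
      rw [intervalIntegral.integral_eq_sub_of_hasDerivAt this
        ((Continuous.intervalIntegrable (by fun_prop) _ _))]
      ring
    rw [← hftc]
    apply intervalIntegral.integral_mono_on hs0.le
    · apply Continuous.intervalIntegrable; fun_prop
    · exact continuous_gphi.intervalIntegrable _ _
    · intro u hu
      rw [gphi_eq]
      nlinarith [ninv_pos, Real.add_one_le_exp (-(u^2)/2)]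
  -- lower bound on gphi s ^ 2
  have h3 : ninv^2 * (1 - s^2) ≤ gphi s ^ 2 := by
    rw [gphi_eq, mul_pow]
    have h4 : Real.exp (-(s^2)/2) ^ 2 = Real.exp (-(s^2)) := by
      rw [← Real.exp_nat_mul]; ring_nf
    rw [h4]
    nlinarith [ninv_pos, Real.add_one_le_exp (-(s^2))]
  rw [gPhi_zero] at h1
  -- combine: ninv^2 (1-s^2) + ninv (s - s^3/6) ≤ 1/4 ; contradiction for s ∈ [0.3, 1)
  have key : ninv^2 * (1 - s^2) + ninv * (s - s^3/6) ≤ 1/4 := by nlinarith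
  have hs2 : 1 - s^2 ≥ 0 := by nlinarith
  have hs3 : s - s^3/6 ≥ 0 := by nlinarith
  have e0 : (0.3989421:ℝ)^2 ≤ ninv^2 := by nlinarith [ninv_lb, ninv_pos]
  have e1 : (0.3989421:ℝ)^2 * (1 - s^2) ≤ ninv^2 * (1 - s^2) :=
    mul_le_mul_of_nonneg_right e0 hs2
  have e2 : (0.3989421:ℝ) * (s - s^3/6) ≤ ninv * (s - s^3/6) :=
    mul_le_mul_of_nonneg_right ninv_lb hs3
  have hA : (0.3989421:ℝ)^2 * (1 - s^2) + 0.3989421 * (s - s^3/6) ≤ 1/4 := by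
    linarith
  have p1 : (s - 0.3) * (1 - s) ≥ 0 :=
    mul_nonneg (by linarith) (by linarith)
  nlinarith [p1, sq_nonneg (s - 0.3), mul_nonneg p1 (by linarith : (0:ℝ) ≤ s - 0.3),
    mul_nonneg p1 (by linarith : (0:ℝ) ≤ 1 - s)]


section PW
variable {s lam : ℝ} (hs0 : 0 < s) (hs3 : s < 0.3) (hlam : lam = 2 * s * gphi s)
include hs0 hlam

lemma pw_quad_right (hs3 : s < 0.3) {t : ℝ} (ht1 : s ≤ t) (ht2 : t ≤ 0.6) :
    5.12 * gphi 0.6 ^ 2 * (t - s) ≤ 8 * t * gphi t ^ 2 - 4 * lam * gphi t := by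
  have h1 : 1.28 * gphi 0.6 * (t - s) ≤ 2 * t * gphi t - lam := by
    rw [hlam]; linarith [g_growth hs0.le ht1 ht2]
  have h2 : gphi 0.6 ≤ gphi t := gphi_anti' (le_trans hs0.le ht1) ht2
  have h3 := gphi_pos' t
  have h4 := gphi_pos' (0.6 : ℝ)
  have h5 : (0:ℝ) ≤ 1.28 * gphi 0.6 * (t - s) := by
    have : (0:ℝ) ≤ t - s := by linarith
    positivity
  have key := mul_le_mul h2 h1 h5 h3.le
  nlinarith [key]

lemma pw_quad_left (hs6 : s ≤ 0.6) {t : ℝ} (ht1 : 0 ≤ t) (ht2 : t ≤ s) :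
    8 * t * gphi t ^ 2 - 4 * lam * gphi t ≤ 5.12 * gphi 0.6 ^ 2 * (t - s) := by
  have h1 : 1.28 * gphi 0.6 * (s - t) ≤ lam - 2 * t * gphi t := by
    rw [hlam]; linarith [g_growth ht1 ht2 hs6]
  have h2 : gphi 0.6 ≤ gphi t := gphi_anti' ht1 (le_trans ht2 hs6)
  have h3 := gphi_pos' t
  have h4 := gphi_pos' (0.6 : ℝ)
  have h5 : (0:ℝ) ≤ 1.28 * gphi 0.6 * (s - t) := by
    have : (0:ℝ) ≤ s - t := by linarith
    positivity
  have key := mul_le_mul h2 h1 h5 h3.le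
  nlinarith [key]

lemma pw_nonneg {t : ℝ} (ht1 : s ≤ t) (ht2 : t ≤ 1) :
    0 ≤ 8 * t * gphi t ^ 2 - 4 * lam * gphi t := by
  have h1 : lam ≤ 2 * t * gphi t := by
    rw [hlam]; exact g_mono hs0.le ht1 ht2
  have h3 := gphi_pos' t
  nlinarith

lemma pw_slab {t : ℝ} (ht1 : 0.6 ≤ t) (ht2 : t ≤ 1) (hs3 : s < 0.3) :
    4 * gphi 1 * (1.2 * gphi 0.6 - 0.6 * gphi 0.3) ≤ 8 * t * gphi t ^ 2 - 4 * lam * gphi t := by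
  have h1 : 1.2 * gphi 0.6 ≤ 2 * t * gphi t := by
    have := g_mono (a := 0.6) (b := t) (by norm_num) ht1 ht2
    linarith
  have hlamU : lam ≤ 0.6 * gphi 0.3 := by
    rw [hlam]
    have := g_mono (a := s) (b := 0.3) hs0.le hs3.le (by norm_num)
    linarith
  have h2 : gphi 1 ≤ gphi t := gphi_anti' (by linarith) ht2
  have h3 := gphi_pos' t
  have hbeta : (0:ℝ) ≤ 1.2 * gphi 0.6 - 0.6 * gphi 0.3 := by
    nlinarith [gphi06'.1, gphi03'.2]
  have key := mul_le_mul h2 (by linarith : 1.2 * gphi 0.6 - 0.6 * gphi 0.3 ≤ 2 * t * gphi t - lam)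
    hbeta h3.le
  nlinarith [key]

lemma pw_mid {t : ℝ} (ht1 : 1 ≤ t) (ht2 : t ≤ 2) (hs3 : s < 0.3) :
    -(4 * gphi 1 * (0.6 * gphi 0.3 - 4 * gphi 2)) ≤ 8 * t * gphi t ^ 2 - 4 * lam * gphi t := by
  have hE : (0:ℝ) ≤ 0.6 * gphi 0.3 - 4 * gphi 2 := by
    nlinarith [gphi03'.1, gphi2'.2]
  have h1 := gphi_pos' (1:ℝ)
  have h3 := gphi_pos' t
  rcases le_or_gt (lam) (2 * t * gphi t) with hc | hc
  · nlinarith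
  · have hlamU : lam ≤ 0.6 * gphi 0.3 := by
      rw [hlam]
      have := g_mono (a := s) (b := 0.3) hs0.le hs3.le (by norm_num)
      linarith
    have hg2 : 4 * gphi 2 ≤ 2 * t * gphi t := by
      have := g_anti (a := t) (b := 2) ht1 ht2
      linarith
    have h2 : gphi t ≤ gphi 1 := gphi_anti' (by norm_num) ht1
    have key := mul_le_mul h2
      (by linarith : lam - 2 * t * gphi t ≤ 0.6 * gphi 0.3 - 4 * gphi 2)
      (by linarith) h1.le
    nlinarith [key]

lemma pw_tail {t : ℝ} (ht1 : 2 ≤ t) (hs3 : s < 0.3) :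
    -(4 * (0.6 * gphi 0.3) * gphi 2 * Real.exp (-2 * (t - 2)))
      ≤ 8 * t * gphi t ^ 2 - 4 * lam * gphi t := by
  have hlamU : lam ≤ 0.6 * gphi 0.3 := by
    rw [hlam]
    have := g_mono (a := s) (b := 0.3) hs0.le hs3.le (by norm_num)
    linarith
  have h3 := gphi_pos' t
  have h03 := gphi_pos' (0.3:ℝ)
  have hexp : gphi t ≤ gphi 2 * Real.exp (-2 * (t - 2)) := by
    rw [gphi_eq, gphi_eq, mul_assoc, ← Real.exp_add]
    apply mul_le_mul_of_nonneg_left _ ninv_pos.le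
    apply Real.exp_le_exp.mpr
    nlinarith [sq_nonneg (t - 2)]
  have ht0 : (0:ℝ) ≤ t := by linarith
  have key : 4 * lam * gphi t ≤ 4 * (0.6 * gphi 0.3) * (gphi 2 * Real.exp (-2 * (t - 2))) := by
    have := mul_le_mul hlamU hexp h3.le (by positivity : (0:ℝ) ≤ 0.6 * gphi 0.3)
    nlinarith [this]
  nlinarith [mul_nonneg (mul_nonneg (by norm_num : (0:ℝ) ≤ 8) ht0) (sq_nonneg (gphi t)), key]

end PW

lemma int_linear (K c a b : ℝ) :
    ∫ t in a..b, K * (t - c) = K * ((b - c)^2 - (a - c)^2) / 2 := by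
  have hd : ∀ x ∈ Set.uIcc a b, HasDerivAt (fun t => K * (t - c)^2 / 2) (K * (x - c)) x := by
    intro x _
    have h := ((((hasDerivAt_id x).sub_const c).pow 2).const_mul K).div_const 2
    refine h.congr_deriv ?_
    simp only [id_eq, Nat.cast_ofNat, pow_one]
    ring
  rw [intervalIntegral.integral_eq_sub_of_hasDerivAt hd
    (Continuous.intervalIntegrable (by fun_prop) _ _)]
  ring

lemma int_expo (M b : ℝ) (hM : 0 ≤ M) :
    -M ≤ ∫ t in (2:ℝ)..b, -(2 * M * Real.exp (-2 * (t - 2))) := by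
  have hd : ∀ x ∈ Set.uIcc (2:ℝ) b, HasDerivAt (fun t => M * Real.exp (-2 * (t - 2)))
      (-(2 * M * Real.exp (-2 * (x - 2)))) x := by
    intro x _
    have h1 : HasDerivAt (fun t : ℝ => -2 * (t - 2)) (-2) x := by
      have := ((hasDerivAt_id x).sub_const 2).const_mul (-2 : ℝ)
      refine this.congr_deriv ?_; ring
    have := (h1.exp).const_mul M
    refine this.congr_deriv ?_
    ring
  rw [intervalIntegral.integral_eq_sub_of_hasDerivAt hd
    (Continuous.intervalIntegrable (by fun_prop) _ _)]
  have h2 : Real.exp (-2 * ((2:ℝ) - 2)) = 1 := by norm_num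
  rw [h2]
  nlinarith [Real.exp_pos (-2 * (b - 2)), hM, mul_nonneg hM (Real.exp_pos (-2 * (b-2))).le]


set_option maxHeartbeats 1000000 in
/-- Near-maximizers of `F` are near `C*`. -/
theorem near_maximizers_near_Cstar
    (Cstar : ℝ) (hCstar : Cstar ∈ Set.Ioo (0 : ℝ) 1)
    (hroot : 4 * gphi Cstar ^ 2 - 4 * gPhi (-Cstar) + 1 = 0)
    (lam : ℝ) (hlam : lam = 2 * Cstar * gphi Cstar)
    (F : ℝ → ℝ) (hF : ∀ C, F C = 4 * gphi C ^ 2 - lam * (4 * gPhi (-C) - 1))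
    (eps : ℝ) (heps0 : 0 ≤ eps) (heps1 : eps < 0.01)
    (C : ℝ) (hC : 0 ≤ C) (hnear : F Cstar - eps ≤ F C) :
    |C - Cstar| ≤ 3 * Real.sqrt eps := by
  obtain ⟨hs0, hs1⟩ := hCstar
  have hs3 : Cstar < 0.3 := cstar_lt Cstar hs0 hs1 hroot
  by_contra hcon
  push_neg at hcon
  have hDle : F Cstar - F C ≤ eps := by linarith
  have hcont : Continuous fun t : ℝ => 8 * t * gphi t ^ 2 - 4 * lam * gphi t := by
    have := continuous_gphi; fun_prop
  have hii : ∀ a b : ℝ,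
      IntervalIntegrable (fun t => 8 * t * gphi t ^ 2 - 4 * lam * gphi t) volume a b :=
    fun a b => hcont.intervalIntegrable a b
  -- The master identity
  have hD : F Cstar - F C = ∫ t in Cstar..C, (8 * t * gphi t ^ 2 - 4 * lam * gphi t) := by
    have e1 := gphi_sq_diff Cstar C
    have e2 := gPhi_neg_diff Cstar C
    have e3 : (∫ t in Cstar..C, (8 * t * gphi t ^ 2 - 4 * lam * gphi t))
        = (∫ t in Cstar..C, 8 * t * gphi t ^ 2) - ∫ t in Cstar..C, 4 * lam * gphi t := by
      apply intervalIntegral.integral_sub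
      · apply Continuous.intervalIntegrable; have := continuous_gphi; fun_prop
      · apply Continuous.intervalIntegrable; have := continuous_gphi; fun_prop
    have e4 : (∫ t in Cstar..C, 4 * lam * gphi t) = 4 * lam * ∫ t in Cstar..C, gphi t := by
      rw [← intervalIntegral.integral_const_mul]
    rw [hF, hF, e3, e4, ← e1, ← e2]
    ring
  set K : ℝ := 5.12 * gphi 0.6 ^ 2 with hKdef
  have hK : (0.284:ℝ) ≤ K := by
    have := gphi06'.1
    nlinarith [gphi_pos' (0.6:ℝ)]
  have hsq : Real.sqrt eps ^ 2 = eps := Real.sq_sqrt heps0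
  have hsqnn : 0 ≤ Real.sqrt eps := Real.sqrt_nonneg eps
  have hcontK : Continuous fun t : ℝ => K * (t - Cstar) := by fun_prop
  rcases le_or_gt C (Cstar + 0.3) with hCle | hCgt
  · -- quadratic regime
    have hquad : K * (C - Cstar) ^ 2 / 2 ≤ F Cstar - F C := by
      rcases le_or_gt Cstar C with h1 | h1
      · have hmono : (∫ t in Cstar..C, K * (t - Cstar))
            ≤ ∫ t in Cstar..C, (8 * t * gphi t ^ 2 - 4 * lam * gphi t) := by
          apply intervalIntegral.integral_mono_on h1 (hcontK.intervalIntegrable _ _) (hii _ _)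
          intro t ht
          exact pw_quad_right hs0 hlam hs3 ht.1 (le_trans ht.2 (by linarith))
        rw [int_linear] at hmono
        rw [hD]
        have : K * ((C - Cstar)^2 - (Cstar - Cstar)^2) / 2 = K * (C - Cstar)^2 / 2 := by ring
        linarith [hmono, this.symm.le]
      · have hmono : (∫ t in C..Cstar, (8 * t * gphi t ^ 2 - 4 * lam * gphi t))
            ≤ ∫ t in C..Cstar, K * (t - Cstar) := by
          apply intervalIntegral.integral_mono_on h1.le (hii _ _) (hcontK.intervalIntegrable _ _)
          intro t ht
          exact pw_quad_left hs0 hlam (by linarith) (le_trans hC ht.1) ht.2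
        rw [int_linear] at hmono
        have hflip : (∫ t in Cstar..C, (8 * t * gphi t ^ 2 - 4 * lam * gphi t))
            = -∫ t in C..Cstar, (8 * t * gphi t ^ 2 - 4 * lam * gphi t) :=
          intervalIntegral.integral_symm C Cstar
        rw [hD, hflip]
        have heq : K * ((Cstar - Cstar)^2 - (C - Cstar)^2)/2 = -(K * (C - Cstar)^2/2) := by ring
        linarith
    have h9 : 9 * eps < (C - Cstar) ^ 2 := by
      have h2 : (3 * Real.sqrt eps) ^ 2 < |C - Cstar| ^ 2 := by
        nlinarith [hcon, hsqnn, abs_nonneg (C - Cstar)]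
      rw [sq_abs] at h2
      nlinarith [hsq]
    have : eps < F Cstar - F C := by
      nlinarith [hquad, mul_nonneg (by linarith : (0:ℝ) ≤ K - 0.284) (sq_nonneg (C - Cstar))]
    linarith
  · -- far regime : show F Cstar - F C ≥ 0.01 > eps
    exfalso
    -- common pieces
    have hI1 : K * 0.045 ≤ ∫ t in Cstar..(Cstar + 0.3),
        (8 * t * gphi t ^ 2 - 4 * lam * gphi t) := by
      have hmono : (∫ t in Cstar..(Cstar + 0.3), K * (t - Cstar))
          ≤ ∫ t in Cstar..(Cstar + 0.3), (8 * t * gphi t ^ 2 - 4 * lam * gphi t) := by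
        apply intervalIntegral.integral_mono_on (by linarith) (hcontK.intervalIntegrable _ _)
          (hii _ _)
        intro t ht
        exact pw_quad_right hs0 hlam hs3 ht.1 (le_trans ht.2 (by linarith))
      rw [int_linear] at hmono
      have heq : K * ((Cstar + 0.3 - Cstar)^2 - (Cstar - Cstar)^2)/2 = K * 0.045 := by ring
      linarith
    have hnum : (0.01:ℝ) < K * 0.045 := by linarith
    rcases le_or_gt C 1 with hC1 | hC1
    · -- Cstar + 0.3 < C ≤ 1
      have hsplit := intervalIntegral.integral_add_adjacent_intervals
        (hii Cstar (Cstar + 0.3)) (hii (Cstar + 0.3) C)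
      have hI2 : 0 ≤ ∫ t in (Cstar + 0.3)..C, (8 * t * gphi t ^ 2 - 4 * lam * gphi t) := by
        apply intervalIntegral.integral_nonneg (by linarith)
        intro t ht
        exact pw_nonneg hs0 hlam (by linarith [ht.1]) (le_trans ht.2 hC1)
      rw [hD, ← hsplit] at hDle
      linarith
    · -- C > 1
      have hI0 : 0 ≤ ∫ t in Cstar..(0.6:ℝ), (8 * t * gphi t ^ 2 - 4 * lam * gphi t) := by
        apply intervalIntegral.integral_nonneg (by linarith)
        intro t ht
        exact pw_nonneg hs0 hlam ht.1 (le_trans ht.2 (by norm_num))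
      have hIslab : 0.4 * (4 * gphi 1 * (1.2 * gphi 0.6 - 0.6 * gphi 0.3))
          ≤ ∫ t in (0.6:ℝ)..1, (8 * t * gphi t ^ 2 - 4 * lam * gphi t) := by
        have hmono : (∫ t in (0.6:ℝ)..1, (4 * gphi 1 * (1.2 * gphi 0.6 - 0.6 * gphi 0.3)))
            ≤ ∫ t in (0.6:ℝ)..1, (8 * t * gphi t ^ 2 - 4 * lam * gphi t) := by
          apply intervalIntegral.integral_mono_on (by norm_num) intervalIntegrable_const
            (hii _ _)
          intro t ht
          exact pw_slab hs0 hlam ht.1 ht.2 hs3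
        rw [intervalIntegral.integral_const, smul_eq_mul] at hmono
        nlinarith [hmono]
      have hslabnum : (0.066:ℝ) ≤ 0.4 * (4 * gphi 1 * (1.2 * gphi 0.6 - 0.6 * gphi 0.3)) := by
        have hb : (0.171:ℝ) ≤ 1.2 * gphi 0.6 - 0.6 * gphi 0.3 := by
          linarith [gphi06'.1, gphi03'.2]
        nlinarith [gphi1'.1, hb]
      have hEnum : 4 * gphi 1 * (0.6 * gphi 0.3 - 4 * gphi 2) ≤ 0.0126 := by
        have hb : 0.6 * gphi 0.3 - 4 * gphi 2 ≤ 0.013 := by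
          linarith [gphi03'.2, gphi2'.1]
        have hb2 : (0:ℝ) ≤ 0.6 * gphi 0.3 - 4 * gphi 2 := by
          nlinarith [gphi03'.1, gphi2'.2]
        nlinarith [gphi1'.2, gphi_pos' (1:ℝ)]
      have hImid : ∀ b : ℝ, 1 ≤ b → b ≤ 2 →
          (b - 1) * -(4 * gphi 1 * (0.6 * gphi 0.3 - 4 * gphi 2))
          ≤ ∫ t in (1:ℝ)..b, (8 * t * gphi t ^ 2 - 4 * lam * gphi t) := by
        intro b hb1 hb2
        have hmono : (∫ t in (1:ℝ)..b, -(4 * gphi 1 * (0.6 * gphi 0.3 - 4 * gphi 2)))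
            ≤ ∫ t in (1:ℝ)..b, (8 * t * gphi t ^ 2 - 4 * lam * gphi t) := by
          apply intervalIntegral.integral_mono_on hb1 intervalIntegrable_const (hii _ _)
          intro t ht
          exact pw_mid hs0 hlam ht.1 (le_trans ht.2 hb2) hs3
        rw [intervalIntegral.integral_const, smul_eq_mul] at hmono
        linarith
      rcases le_or_gt C 2 with hC2 | hC2
      · -- 1 < C ≤ 2
        have hsplit1 := intervalIntegral.integral_add_adjacent_intervals
          (hii Cstar 0.6) (hii 0.6 C)
        have hsplit2 := intervalIntegral.integral_add_adjacent_intervals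
          (hii 0.6 1) (hii 1 C)
        have hmid := hImid C hC1.le hC2
        have hE0 : 0 ≤ 4 * gphi 1 * (0.6 * gphi 0.3 - 4 * gphi 2) := by
          nlinarith [gphi03'.1, gphi2'.2, gphi_pos' (1:ℝ)]
        have : (C - 1) * -(4 * gphi 1 * (0.6 * gphi 0.3 - 4 * gphi 2))
            ≥ -(4 * gphi 1 * (0.6 * gphi 0.3 - 4 * gphi 2)) := by
          nlinarith [hE0]
        rw [hD, ← hsplit1, ← hsplit2] at hDle
        linarith
      · -- C > 2
        have hsplit1 := intervalIntegral.integral_add_adjacent_intervals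
          (hii Cstar 0.6) (hii 0.6 C)
        have hsplit2 := intervalIntegral.integral_add_adjacent_intervals
          (hii 0.6 1) (hii 1 C)
        have hsplit3 := intervalIntegral.integral_add_adjacent_intervals
          (hii 1 2) (hii 2 C)
        have hmid := hImid 2 (by norm_num) (by norm_num)
        norm_num at hmid
        have htail : -(2 * (0.6 * gphi 0.3) * gphi 2)
            ≤ ∫ t in (2:ℝ)..C, (8 * t * gphi t ^ 2 - 4 * lam * gphi t) := by
          have hM : 0 ≤ 2 * (0.6 * gphi 0.3) * gphi 2 := by
            have := gphi_pos' (0.3:ℝ); have := gphi_pos' (2:ℝ); positivity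
          have hmono : (∫ t in (2:ℝ)..C, -(2 * (2 * (0.6 * gphi 0.3) * gphi 2)
                * Real.exp (-2 * (t - 2))))
              ≤ ∫ t in (2:ℝ)..C, (8 * t * gphi t ^ 2 - 4 * lam * gphi t) := by
            apply intervalIntegral.integral_mono_on (by linarith)
              (Continuous.intervalIntegrable (by fun_prop) _ _) (hii _ _)
            intro t ht
            have := pw_tail hs0 hlam ht.1 hs3
            convert this using 2
            ring
          have := int_expo (2 * (0.6 * gphi 0.3) * gphi 2) C hM
          linarith
        have htailnum : 2 * (0.6 * gphi 0.3) * gphi 2 ≤ 0.0248 := by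
          nlinarith [gphi03'.2, gphi2'.2, gphi_pos' (0.3:ℝ), gphi_pos' (2:ℝ)]
        rw [hD, ← hsplit1, ← hsplit2, ← hsplit3] at hDle
        linarith
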